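/- Let d ≥ 0 and t ∈ ℝ with 0 < √(d² + t²) < π; set r := √(d² + t²) and α := r/2. Define the two real 3×3 matrices G± := [[cos α + (t²/r²)(1 − cos α), ±(d/r) sin α, (d t/r²)(1 − cos α)], [∓(d/r) sin α, cos α, ±(t/r) sin α], [(d t/r²)(1 − cos α), ∓(t/r) sin α, cos α + (d²/r²)(1 − cos α)]]. Then G₊, G₋ ∈ SO(3), and the Euclidean inner products of the corresponding columns satisfy: ⟨G₊e₁, G₋e₁⟩ = (t² + d² cos r)/(d² + t²), ⟨G₊e₂, G₋e₂⟩ = cos r, and ⟨G₊e₃, G₋e₃⟩ = (d² + t² cos r)/(d² + t²). -/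
import Mathlib


open Matrix

/-- the one-sided limit rotations `G±` at a jump of sizes `(d, t)` lie in
`SO(3)`, and the inner products of their corresponding columns are the stated cosines of
the jump angles of tangent, normal and binormal. -/
theorem stmt_13 (d t : ℝ) (hd : 0 ≤ d)
    (r α : ℝ) (hr : r = Real.sqrt (d ^ 2 + t ^ 2)) (hrange : 0 < r ∧ r < Real.pi)
    (hα : α = r / 2)
    (Gp Gm : Matrix (Fin 3) (Fin 3) ℝ)
    (hGp : Gp = !![Real.cos α + t ^ 2 / r ^ 2 * (1 - Real.cos α),
        d / r * Real.sin α, d * t / r ^ 2 * (1 - Real.cos α);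
      -(d / r * Real.sin α), Real.cos α, t / r * Real.sin α;
      d * t / r ^ 2 * (1 - Real.cos α), -(t / r * Real.sin α),
        Real.cos α + d ^ 2 / r ^ 2 * (1 - Real.cos α)])
    (hGm : Gm = !![Real.cos α + t ^ 2 / r ^ 2 * (1 - Real.cos α),
        -(d / r * Real.sin α), d * t / r ^ 2 * (1 - Real.cos α);
      d / r * Real.sin α, Real.cos α, -(t / r * Real.sin α);
      d * t / r ^ 2 * (1 - Real.cos α), t / r * Real.sin α,
        Real.cos α + d ^ 2 / r ^ 2 * (1 - Real.cos α)]) :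
    (Gpᵀ * Gp = 1 ∧ Gp.det = 1) ∧
    (Gmᵀ * Gm = 1 ∧ Gm.det = 1) ∧
    (∑ i, Gp i 0 * Gm i 0) = (t ^ 2 + d ^ 2 * Real.cos r) / (d ^ 2 + t ^ 2) ∧
    (∑ i, Gp i 1 * Gm i 1) = Real.cos r ∧
    (∑ i, Gp i 2 * Gm i 2) = (d ^ 2 + t ^ 2 * Real.cos r) / (d ^ 2 + t ^ 2) := by
  obtain ⟨hr0, hrpi⟩ := hrange
  have hrne : r ≠ 0 := ne_of_gt hr0
  have hr2 : r ^ 2 = d ^ 2 + t ^ 2 := by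
    rw [hr]; exact Real.sq_sqrt (by positivity)
  have hxy : (d / r) ^ 2 + (t / r) ^ 2 = 1 := by
    field_simp
    linarith [hr2]
  have hc : Real.sin α ^ 2 = 1 - Real.cos α ^ 2 := Real.sin_sq α
  have hcr : Real.cos r = 2 * Real.cos α ^ 2 - 1 := by
    have h2 : r = 2 * α := by rw [hα]; ring
    rw [h2, Real.cos_two_mul]
  have hd2 : d ^ 2 = (d / r) ^ 2 * r ^ 2 := by field_simp
  have ht2 : t ^ 2 = (t / r) ^ 2 * r ^ 2 := by field_simp
  have hne : d ^ 2 + t ^ 2 ≠ 0 := by rw [← hr2]; positivity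
  subst hGp hGm
  refine ⟨⟨?_, ?_⟩, ⟨?_, ?_⟩, ?_, ?_, ?_⟩
  · ext i j
    fin_cases i <;> fin_cases j <;>
      simp [Matrix.mul_apply, Matrix.transpose_apply, Fin.sum_univ_three, Matrix.one_apply, Matrix.vecHead, Matrix.vecTail, Function.comp]
    · linear_combination ((d/r)^2) * hc + ((1) + (-1)*(Real.cos α)^2 + (t/r)^2 + (-2)*(t/r)^2*(Real.cos α) + (t/r)^2*(Real.cos α)^2) * hxy
    · ring
    · linear_combination ((-1)*(d/r)*(t/r)) * hc + ((d/r)*(t/r) + (-2)*(d/r)*(t/r)*(Real.cos α) + (d/r)*(t/r)*(Real.cos α)^2) * hxy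
    · ring
    · linear_combination ((t/r)^2 + (d/r)^2) * hc + ((1) + (-1)*(Real.cos α)^2) * hxy
    · ring
    · linear_combination ((-1)*(d/r)*(t/r)) * hc + ((d/r)*(t/r) + (-2)*(d/r)*(t/r)*(Real.cos α) + (d/r)*(t/r)*(Real.cos α)^2) * hxy
    · ring
    · linear_combination ((t/r)^2) * hc + ((1) + (-1)*(Real.cos α)^2 + (d/r)^2 + (-2)*(d/r)^2*(Real.cos α) + (d/r)^2*(Real.cos α)^2) * hxy
  · simp [Matrix.det_fin_three]
    linear_combination ((t/r)^2*(Real.cos α) + (t/r)^4 + (-1)*(t/r)^4*(Real.cos α) + (d/r)^2*(Real.cos α) + (2)*(d/r)^2*(t/r)^2 + (-2)*(d/r)^2*(t/r)^2*(Real.cos α) + (d/r)^4 + (-1)*(d/r)^4*(Real.cos α)) * hc + ((1) + (-1)*(Real.cos α)^3 + (t/r)^2 + (-1)*(t/r)^2*(Real.cos α) + (-1)*(t/r)^2*(Real.cos α)^2 + (t/r)^2*(Real.cos α)^3 + (d/r)^2 + (-1)*(d/r)^2*(Real.cos α) + (-1)*(d/r)^2*(Real.cos α)^2 + (d/r)^2*(Real.cos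 α)^3) * hxy
  · ext i j
    fin_cases i <;> fin_cases j <;>
      simp [Matrix.mul_apply, Matrix.transpose_apply, Fin.sum_univ_three, Matrix.one_apply, Matrix.vecHead, Matrix.vecTail, Function.comp]
    · linear_combination ((d/r)^2) * hc + ((1) + (-1)*(Real.cos α)^2 + (t/r)^2 + (-2)*(t/r)^2*(Real.cos α) + (t/r)^2*(Real.cos α)^2) * hxy
    · ring
    · linear_combination ((-1)*(d/r)*(t/r)) * hc + ((d/r)*(t/r) + (-2)*(d/r)*(t/r)*(Real.cos α) + (d/r)*(t/r)*(Real.cos α)^2) * hxy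
    · ring
    · linear_combination ((t/r)^2 + (d/r)^2) * hc + ((1) + (-1)*(Real.cos α)^2) * hxy
    · ring
    · linear_combination ((-1)*(d/r)*(t/r)) * hc + ((d/r)*(t/r) + (-2)*(d/r)*(t/r)*(Real.cos α) + (d/r)*(t/r)*(Real.cos α)^2) * hxy
    · ring
    · linear_combination ((t/r)^2) * hc + ((1) + (-1)*(Real.cos α)^2 + (d/r)^2 + (-2)*(d/r)^2*(Real.cos α) + (d/r)^2*(Real.cos α)^2) * hxy
  · simp [Matrix.det_fin_three]
    linear_combination ((t/r)^2*(Real.cos α) + (t/r)^4 + (-1)*(t/r)^4*(Real.cos α) + (d/r)^2*(Real.cos α) + (2)*(d/r)^2*(t/r)^2 + (-2)*(d/r)^2*(t/r)^2*(Real.cos α) + (d/r)^4 + (-1)*(d/r)^4*(Real.cos α)) * hc + ((1) + (-1)*(Real.cos α)^3 + (t/r)^2 + (-1)*(t/r)^2*(Real.cos α) + (-1)*(t/r)^2*(Real.cos α)^2 + (t/r)^2*(Real.cos α)^3 + (d/r)^2 + (-1)*(d/r)^2*(Real.cos α) + (-1)*(d/r)^2*(Real.cos α)^2 + (d/r)^2*(Real.cos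 α)^3) * hxy
  · rw [Fin.sum_univ_three, hcr, eq_div_iff hne]
    simp only [Matrix.cons_val_zero, Matrix.cons_val_one, Matrix.head_cons, Matrix.cons_val_two,
      Matrix.tail_cons, Matrix.head_fin_const, Matrix.cons_val', Matrix.empty_val',
      Matrix.cons_val_fin_one, Matrix.of_apply]
    linear_combination ((1) + (-1)*(Real.cos α)^2 + (2)*(t/r)^2*(Real.cos α) + (-2)*(t/r)^2*(Real.cos α)^2 + (t/r)^4 + (-2)*(t/r)^4*(Real.cos α) + (t/r)^4*(Real.cos α)^2 + (-1)*(d/r)^2*(Real.sin α)^2 + (d/r)^2*(t/r)^2 + (-2)*(d/r)^2*(t/r)^2*(Real.cos α) + (d/r)^2*(t/r)^2*(Real.cos α)^2) * hd2 + ((-1) + (Real.cos α)^2 + (2)*(t/r)^2*(Real.cos α) + (-2)*(t/r)^2*(Real.cos α)^2 + (t/r)^4 + (-2)*(t/r)^4*(Real.cos α) + (t/r)^4*(Real.cos α)^2 + (-1)*(d/r)^2*(Real.sin α)^2 + (d/r)^2*(t/r)^2 + (-2)*(d/r)^2*(t/r)^2*(Real.cos α) + (d/r)^2*(t/r)^2*(Real.cos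 α)^2) * ht2 + ((-1)*(d/r)^2*(t/r)^2*r^2 + (-1)*(d/r)^4*r^2) * hc + ((t/r)^2*r^2 + (-1)*(t/r)^2*(Real.cos α)^2*r^2 + (t/r)^4*r^2 + (-2)*(t/r)^4*(Real.cos α)*r^2 + (t/r)^4*(Real.cos α)^2*r^2 + (-1)*(d/r)^2*r^2 + (d/r)^2*(Real.cos α)^2*r^2 + (d/r)^2*(t/r)^2*r^2 + (-2)*(d/r)^2*(t/r)^2*(Real.cos α)*r^2 + (d/r)^2*(t/r)^2*(Real.cos α)^2*r^2) * hxy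
  · rw [Fin.sum_univ_three, hcr]
    simp only [Matrix.cons_val_zero, Matrix.cons_val_one, Matrix.head_cons, Matrix.cons_val_two,
      Matrix.tail_cons, Matrix.head_fin_const, Matrix.cons_val', Matrix.empty_val',
      Matrix.cons_val_fin_one, Matrix.of_apply]
    linear_combination ((-1)*(t/r)^2 + (-1)*(d/r)^2) * hc + ((-1) + (Real.cos α)^2) * hxy
  · rw [Fin.sum_univ_three, hcr, eq_div_iff hne]
    simp only [Matrix.cons_val_zero, Matrix.cons_val_one, Matrix.head_cons, Matrix.cons_val_two,
      Matrix.tail_cons, Matrix.head_fin_const, Matrix.cons_val', Matrix.empty_val',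
      Matrix.cons_val_fin_one, Matrix.of_apply]
    linear_combination ((-1) + (Real.cos α)^2 + (-1)*(t/r)^2*(Real.sin α)^2 + (2)*(d/r)^2*(Real.cos α) + (-2)*(d/r)^2*(Real.cos α)^2 + (d/r)^2*(t/r)^2 + (-2)*(d/r)^2*(t/r)^2*(Real.cos α) + (d/r)^2*(t/r)^2*(Real.cos α)^2 + (d/r)^4 + (-2)*(d/r)^4*(Real.cos α) + (d/r)^4*(Real.cos α)^2) * hd2 + ((1) + (-1)*(Real.cos α)^2 + (-1)*(t/r)^2*(Real.sin α)^2 + (2)*(d/r)^2*(Real.cos α) + (-2)*(d/r)^2*(Real.cos α)^2 + (d/r)^2*(t/r)^2 + (-2)*(d/r)^2*(t/r)^2*(Real.cos α) + (d/r)^2*(t/r)^2*(Real.cos α)^2 + (d/r)^4 + (-2)*(d/r)^4*(Real.cos α) + (d/r)^4*(Real.cos α)^2) * ht2 + ((-1)*(t/r)^4*r^2 + (-1)*(d/r)^2*(t/r)^2*r^2) * hc + ((-1)*(t/r)^2*r^2 + (t/r)^2*(Real.cos α)^2*r^2 + (d/r)^2*r^2 + (-1)*(d/r)^2*(Real.cos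 α)^2*r^2 + (d/r)^2*(t/r)^2*r^2 + (-2)*(d/r)^2*(t/r)^2*(Real.cos α)*r^2 + (d/r)^2*(t/r)^2*(Real.cos α)^2*r^2 + (d/r)^4*r^2 + (-2)*(d/r)^4*(Real.cos α)*r^2 + (d/r)^4*(Real.cos α)^2*r^2) * hxy
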